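/- Let a > 0 and c ≥ 0 be real numbers with a·τ₂ < 1, and define σ(t) = ∫₀¹ H(t,s) ds. If u ∈ C([0,1],ℝ) satisfies u(t) ≥ 0 and u(t) ≤ a·(Ku)(t) + c·σ(t) for all t ∈ [0,1], then ‖u‖∞ ≤ c·τ₂/(1 − a·τ₂). -/
import Mathlib

open MeasureTheory Set Filter

noncomputable def G (α t s : ℝ) : ℝ :=
  if s ≤ t then (t * (1 - s) ^ (α - 1) - (t - s) ^ (α - 1)) / Real.Gamma α
  else t * (1 - s) ^ (α - 1) / Real.Gamma α

noncomputable def Psi (α s : ℝ) : ℝ := (1 - s) ^ (α - 1) / Real.Gamma α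

/-- Integral of `f` over `[0,1]` against the finite signed measure `ν`
(via its Jordan decomposition). -/
noncomputable def stInt (ν : MeasureTheory.SignedMeasure ℝ) (f : ℝ → ℝ) : ℝ :=
  ∫ t in Icc (0:ℝ) 1, f t ∂ν.toJordanDecomposition.posPart
    - ∫ t in Icc (0:ℝ) 1, f t ∂ν.toJordanDecomposition.negPart

noncomputable def gA (α : ℝ) (ν : MeasureTheory.SignedMeasure ℝ) (s : ℝ) : ℝ :=
  stInt ν (fun t => G α t s)

noncomputable def Lam (η μ₀ β : ℝ) (ν : MeasureTheory.SignedMeasure ℝ) : ℝ :=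
  μ₀ * η + β * stInt ν (fun t => t)

noncomputable def Hker (α η μ₀ β : ℝ) (ν : MeasureTheory.SignedMeasure ℝ) (t s : ℝ) : ℝ :=
  β * t / (1 - Lam η μ₀ β ν) * gA α ν s
    + μ₀ * t / (1 - Lam η μ₀ β ν) * G α η s + G α t s

noncomputable def Phi (α η μ₀ β : ℝ) (ν : MeasureTheory.SignedMeasure ℝ) (s : ℝ) : ℝ :=
  β / (1 - Lam η μ₀ β ν) * gA α ν s
    + (μ₀ - Lam η μ₀ β ν + 1) / (1 - Lam η μ₀ β ν) * Psi α s

noncomputable def rho (α η t : ℝ) : ℝ := (η - η ^ (α - 1)) * (t - t ^ (α - 1))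

noncomputable def tau1 (α η μ₀ β : ℝ) (ν : MeasureTheory.SignedMeasure ℝ) : ℝ :=
  ∫ s in Icc (0:ℝ) 1, rho α η s * Phi α η μ₀ β ν s

noncomputable def tau2 (α η μ₀ β : ℝ) (ν : MeasureTheory.SignedMeasure ℝ) : ℝ :=
  ∫ s in Icc (0:ℝ) 1, Phi α η μ₀ β ν s

lemma cont_rpow {α : ℝ} (hα : 2 < α) : Continuous fun x : ℝ => x ^ (α - 1) := by
  rw [continuous_iff_continuousAt]
  intro x
  exact Real.continuousAt_rpow_const x _ (Or.inr (by linarith))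

lemma G_cont {α : ℝ} (hα : 2 < α) : Continuous fun p : ℝ × ℝ => G α p.1 p.2 := by
  have h := cont_rpow hα
  unfold G
  apply Continuous.if_le
  · exact ((continuous_fst.mul (h.comp (continuous_const.sub continuous_snd))).sub
      (h.comp (continuous_fst.sub continuous_snd))).div_const _
  · exact (continuous_fst.mul (h.comp (continuous_const.sub continuous_snd))).div_const _
  · exact continuous_snd
  · exact continuous_fst
  · intro p hp
    have : p.1 - p.2 = 0 := by rw [hp]; ring
    rw [this, Real.zero_rpow (by linarith : α - 1 ≠ 0)]
    ring

lemma Gamma_pos' {α : ℝ} (hα : 2 < α) : 0 < Real.Gamma α :=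
  Real.Gamma_pos_of_pos (by linarith)

lemma G_nonneg {α : ℝ} (hα : 2 < α) {t s : ℝ} (ht : t ∈ Icc (0:ℝ) 1)
    (hs : s ∈ Icc (0:ℝ) 1) : 0 ≤ G α t s := by
  obtain ⟨ht0, ht1⟩ := ht; obtain ⟨hs0, hs1⟩ := hs
  have hΓ := Gamma_pos' hα
  have he : (0:ℝ) ≤ α - 1 := by linarith
  unfold G
  split_ifs with h
  · apply div_nonneg _ hΓ.le
    have h1 : (t - s) ^ (α - 1) ≤ (t * (1 - s)) ^ (α - 1) :=
      Real.rpow_le_rpow (by linarith) (by nlinarith) he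
    have h2 : (t * (1 - s)) ^ (α - 1) = t ^ (α - 1) * (1 - s) ^ (α - 1) :=
      Real.mul_rpow ht0 (by linarith)
    have h3 : t ^ (α - 1) ≤ t := by
      rcases eq_or_lt_of_le ht0 with h0 | h0
      · rw [← h0, Real.zero_rpow (by linarith : α - 1 ≠ 0)]
      · calc t ^ (α - 1) ≤ t ^ (1:ℝ) :=
              Real.rpow_le_rpow_of_exponent_ge h0 ht1 (by linarith)
          _ = t := Real.rpow_one t
    have h4 : t ^ (α - 1) * (1 - s) ^ (α - 1) ≤ t * (1 - s) ^ (α - 1) :=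
      mul_le_mul_of_nonneg_right h3 (Real.rpow_nonneg (by linarith) _)
    linarith
  · exact div_nonneg (mul_nonneg ht0 (Real.rpow_nonneg (by linarith) _)) hΓ.le

lemma Psi_nonneg {α : ℝ} (hα : 2 < α) {s : ℝ} (hs : s ∈ Icc (0:ℝ) 1) :
    0 ≤ Psi α s :=
  div_nonneg (Real.rpow_nonneg (by linarith [hs.2]) _) (Gamma_pos' hα).le

lemma G_le_Psi {α : ℝ} (hα : 2 < α) {t s : ℝ} (ht : t ∈ Icc (0:ℝ) 1)
    (hs : s ∈ Icc (0:ℝ) 1) : G α t s ≤ Psi α s := by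
  obtain ⟨ht0, ht1⟩ := ht; obtain ⟨hs0, hs1⟩ := hs
  have hΓ := Gamma_pos' hα
  have hp : (0:ℝ) ≤ (1 - s) ^ (α - 1) := Real.rpow_nonneg (by linarith) _
  have htp : t * (1 - s) ^ (α - 1) ≤ (1 - s) ^ (α - 1) := by nlinarith
  unfold G Psi
  split_ifs with h
  · rw [div_le_div_iff₀ hΓ hΓ]
    have : (0:ℝ) ≤ (t - s) ^ (α - 1) := Real.rpow_nonneg (by linarith) _
    nlinarith
  · rw [div_le_div_iff₀ hΓ hΓ]
    nlinarith

lemma Psi_le {α : ℝ} (hα : 2 < α) {s : ℝ} (hs : s ∈ Icc (0:ℝ) 1) :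
    Psi α s ≤ 1 / Real.Gamma α := by
  obtain ⟨hs0, hs1⟩ := hs
  have hΓ := Gamma_pos' hα
  unfold Psi
  rw [div_le_div_iff₀ hΓ hΓ]
  have : (1 - s) ^ (α - 1) ≤ 1 :=
    Real.rpow_le_one (by linarith) (by linarith) (by linarith)
  nlinarith

lemma gA_contOn {α : ℝ} (hα : 2 < α) (ν : MeasureTheory.SignedMeasure ℝ) :
    ContinuousOn (gA α ν) (Icc (0:ℝ) 1) := by
  have key : ∀ (μ : Measure ℝ), IsFiniteMeasure μ →
      ContinuousOn (fun s => ∫ t in Icc (0:ℝ) 1, G α t s ∂μ) (Icc (0:ℝ) 1) := by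
    intro μ hμ
    apply continuousOn_of_dominated (bound := fun _ => 1 / Real.Gamma α)
    · intro s _
      exact ((G_cont hα).comp (continuous_id.prodMk continuous_const)).aestronglyMeasurable
    · intro s hs
      filter_upwards [ae_restrict_mem measurableSet_Icc] with t ht
      rw [Real.norm_eq_abs, abs_of_nonneg (G_nonneg hα ht hs)]
      exact (G_le_Psi hα ht hs).trans (Psi_le hα hs)
    · exact integrable_const _
    · filter_upwards with t
      exact ((G_cont hα).comp (continuous_const.prodMk continuous_id)).continuousOn
  have h1 := key _ (by infer_instance : IsFiniteMeasure ν.toJordanDecomposition.posPart)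
  have h2 := key _ (by infer_instance : IsFiniteMeasure ν.toJordanDecomposition.negPart)
  exact h1.sub h2

/-- A priori bound from the proof of Theorem 3.1. -/
theorem apriori_bound (α η μ₀ β : ℝ) (ν : MeasureTheory.SignedMeasure ℝ)
    (hα₁ : 2 < α) (hα₂ : α ≤ 3) (hη : η ∈ Ioo (0:ℝ) 1) (hμ : 0 ≤ μ₀) (hβ : 0 ≤ β)
    (hΛ₀ : 0 ≤ Lam η μ₀ β ν) (hΛ₁ : Lam η μ₀ β ν < 1)
    (hgA : ∀ s ∈ Icc (0:ℝ) 1, 0 ≤ gA α ν s)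
    (a c : ℝ) (ha : 0 < a) (hc : 0 ≤ c) (hat : a * tau2 α η μ₀ β ν < 1)
    (u : ℝ → ℝ) (hu : ContinuousOn u (Icc (0:ℝ) 1))
    (hupos : ∀ t ∈ Icc (0:ℝ) 1, 0 ≤ u t)
    (hule : ∀ t ∈ Icc (0:ℝ) 1,
      u t ≤ a * (∫ s in Icc (0:ℝ) 1, Hker α η μ₀ β ν t s * u s)
            + c * ∫ s in Icc (0:ℝ) 1, Hker α η μ₀ β ν t s) :
    ∀ t ∈ Icc (0:ℝ) 1, |u t| ≤ c * tau2 α η μ₀ β ν / (1 - a * tau2 α η μ₀ β ν) := by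
  set Λ := Lam η μ₀ β ν with hΛdef
  have hD : 0 < 1 - Λ := by linarith
  have hηm : η ∈ Icc (0:ℝ) 1 := ⟨hη.1.le, hη.2.le⟩
  -- pointwise bounds
  have Hnn : ∀ t ∈ Icc (0:ℝ) 1, ∀ s ∈ Icc (0:ℝ) 1, 0 ≤ Hker α η μ₀ β ν t s := by
    intro t ht s hs
    unfold Hker
    have h1 : 0 ≤ β * t / (1 - Λ) * gA α ν s :=
      mul_nonneg (div_nonneg (mul_nonneg hβ ht.1) hD.le) (hgA s hs)
    have h2 : 0 ≤ μ₀ * t / (1 - Λ) * G α η s :=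
      mul_nonneg (div_nonneg (mul_nonneg hμ ht.1) hD.le) (G_nonneg hα₁ hηm hs)
    have h3 := G_nonneg hα₁ ht hs
    linarith
  have HleΦ : ∀ t ∈ Icc (0:ℝ) 1, ∀ s ∈ Icc (0:ℝ) 1,
      Hker α η μ₀ β ν t s ≤ Phi α η μ₀ β ν s := by
    intro t ht s hs
    unfold Hker Phi
    have hga := hgA s hs
    have hGη := G_nonneg hα₁ hηm hs
    have hGηP := G_le_Psi hα₁ hηm hs
    have hGtP := G_le_Psi hα₁ ht hs
    have hΨ := Psi_nonneg hα₁ hs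
    have e : (μ₀ - Λ + 1) / (1 - Λ) = μ₀ / (1 - Λ) + 1 := by
      field_simp
      ring
    rw [e]
    have h1 : β * t / (1 - Λ) * gA α ν s ≤ β / (1 - Λ) * gA α ν s := by
      apply mul_le_mul_of_nonneg_right _ hga
      apply div_le_div_of_nonneg_right _ hD.le
      nlinarith [ht.2]
    have h2 : μ₀ * t / (1 - Λ) * G α η s ≤ μ₀ / (1 - Λ) * Psi α s := by
      apply mul_le_mul
      · apply div_le_div_of_nonneg_right _ hD.le
        nlinarith [ht.2]
      · exact hGηP
      · exact hGη
      · exact div_nonneg hμ hD.le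
    nlinarith
  have Φnn : ∀ s ∈ Icc (0:ℝ) 1, 0 ≤ Phi α η μ₀ β ν s := by
    intro s hs
    unfold Phi
    have h1 : 0 ≤ β / (1 - Λ) * gA α ν s :=
      mul_nonneg (div_nonneg hβ hD.le) (hgA s hs)
    have h2 : 0 ≤ (μ₀ - Λ + 1) / (1 - Λ) * Psi α s :=
      mul_nonneg (div_nonneg (by linarith) hD.le) (Psi_nonneg hα₁ hs)
    linarith
  -- continuity / integrability
  have ΨC : Continuous (fun s : ℝ => Psi α s) := by
    unfold Psi
    exact ((cont_rpow hα₁).comp (continuous_const.sub continuous_id)).div_const _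
  have ΦC : ContinuousOn (Phi α η μ₀ β ν) (Icc (0:ℝ) 1) := by
    unfold Phi
    exact (continuousOn_const.mul (gA_contOn hα₁ ν)).add
      (continuousOn_const.mul ΨC.continuousOn)
  have IΦ : IntegrableOn (Phi α η μ₀ β ν) (Icc (0:ℝ) 1) := ΦC.integrableOn_Icc
  have HC : ∀ t : ℝ, ContinuousOn (fun s => Hker α η μ₀ β ν t s) (Icc (0:ℝ) 1) := by
    intro t
    unfold Hker
    exact ((continuousOn_const.mul (gA_contOn hα₁ ν)).add
      (continuousOn_const.mul
        (((G_cont hα₁).comp (continuous_const.prodMk continuous_id)).continuousOn))).add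
      (((G_cont hα₁).comp (continuous_const.prodMk continuous_id)).continuousOn)
  -- maximum of u
  obtain ⟨t₀, ht₀, hmax⟩ :=
    isCompact_Icc.exists_isMaxOn (nonempty_Icc.mpr zero_le_one) hu
  set M := u t₀ with hMdef
  have hM0 : 0 ≤ M := hupos t₀ ht₀
  have IΦM : IntegrableOn (fun s => Phi α η μ₀ β ν s * M) (Icc (0:ℝ) 1) :=
    IΦ.mul_const M
  have τnn : 0 ≤ tau2 α η μ₀ β ν := by
    apply setIntegral_nonneg measurableSet_Icc Φnn
  have key : ∀ t ∈ Icc (0:ℝ) 1,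
      u t ≤ a * (tau2 α η μ₀ β ν * M) + c * tau2 α η μ₀ β ν := by
    intro t ht
    have IHu : IntegrableOn (fun s => Hker α η μ₀ β ν t s * u s) (Icc (0:ℝ) 1) :=
      ((HC t).mul hu).integrableOn_Icc
    have IH : IntegrableOn (fun s => Hker α η μ₀ β ν t s) (Icc (0:ℝ) 1) :=
      (HC t).integrableOn_Icc
    have h1 : (∫ s in Icc (0:ℝ) 1, Hker α η μ₀ β ν t s * u s)
        ≤ ∫ s in Icc (0:ℝ) 1, Phi α η μ₀ β ν s * M := by
      apply setIntegral_mono_on IHu IΦM measurableSet_Icc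
      intro s hs
      exact mul_le_mul (HleΦ t ht s hs) (hmax hs) (hupos s hs) (Φnn s hs)
    have h1' : (∫ s in Icc (0:ℝ) 1, Phi α η μ₀ β ν s * M)
        = tau2 α η μ₀ β ν * M := by
      rw [integral_mul_const, tau2]
    have h2 : (∫ s in Icc (0:ℝ) 1, Hker α η μ₀ β ν t s) ≤ tau2 α η μ₀ β ν := by
      apply setIntegral_mono_on IH IΦ measurableSet_Icc
      intro s hs
      exact HleΦ t ht s hs
    have := hule t ht
    rw [h1'] at h1
    nlinarith
  have hden : 0 < 1 - a * tau2 α η μ₀ β ν := by linarith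
  have hMle : M ≤ c * tau2 α η μ₀ β ν / (1 - a * tau2 α η μ₀ β ν) := by
    rw [le_div_iff₀ hden]
    have := key t₀ ht₀
    nlinarith
  intro t ht
  rw [abs_of_nonneg (hupos t ht)]
  exact le_trans (hmax ht) hMle
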